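/- For X, Y > 0, among all θ ≠ 0, feasibility of the system {‖y‖² ≥ max(θ² λ X, λ Y)} ∪ C (where C is a θ-independent constraint set closed under the rescalings y ↦ αy with 0 < α ≤ 1 when combined with fixing x, and x ↦ βx with 0 < β ≤ 1 when combined with fixing y, preserving the coupling constraints) for some λ implies feasibility for θ* = √(Y/X) with the same λ. Concretely in the scalarized model: if there exist x, y ≥ 0 (componentwise) with ∑ₙ yₙ² ≥ max((θ⁽¹⁾)² λ X, λY), yₙ = θ⁽¹⁾ xₙ gₙ, and pₙ = xₙ²((1−ρₙ)Hₙ+1) ≤ η ρₙ Hₙ for some θ⁽¹⁾ > θ* = √(Y/X), then setting y* = (θ*/θ⁽¹⁾) y with the same x, ρ adjusted so that (1−ρₙ*)Hₙ+1 scales appropriately yields ∑ₙ (yₙ*)² ≥ λY, yₙ* = θ* xₙ gₙ, and the power constraints still hold. -/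

import Mathlib

open scoped BigOperators

/-! Rescaling `y` by `α = θ*/θ⁽¹⁾` multiplies `∑ yₙ²` by `α²`, and `α² (θ⁽¹⁾)² λ X = (θ*)² λ X = λ Y`;
the relation `yₙ = θ xₙ gₙ` rescales with `θ`, and the power constraints do not involve `y`. -/

theorem sq_sqrt_div_div_mul_sq_mul {X Y θ : ℝ} (hX : 0 < X) (hY : 0 ≤ Y) (hθ : θ ≠ 0) :
    (Real.sqrt (Y / X) / θ) ^ 2 * (θ ^ 2 * X) = Y := by
  rw [div_pow, Real.sq_sqrt (div_nonneg hY hX.le)]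
  field_simp

theorem sum_sq_const_mul {ι R : Type*} [CommSemiring R] (s : Finset ι) (c : R) (y : ι → R) :
    ∑ n ∈ s, (c * y n) ^ 2 = c ^ 2 * ∑ n ∈ s, y n ^ 2 := by
  simp only [mul_pow, Finset.mul_sum]

theorem stmt_11_general {N : ℕ} (η X Y lam θ1 : ℝ) (hX : 0 < X) (hY : 0 < Y)
    (g H ρ x y p : Fin N → ℝ)
    (hθ1 : Real.sqrt (Y / X) < θ1)
    (hsum : max (θ1^2 * lam * X) (lam * Y) ≤ ∑ n, (y n)^2)
    (hy : ∀ n, y n = θ1 * x n * g n)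
    (hpb : ∀ n, p n ≤ η * ρ n * H n) :
    let θstar := Real.sqrt (Y / X)
    let ystar := fun n => (θstar / θ1) * y n
    lam * Y ≤ ∑ n, (ystar n)^2 ∧
    (∀ n, ystar n = θstar * x n * g n) ∧
    (∀ n, p n ≤ η * ρ n * H n) := by
  intro θstar ystar
  have hθ1_ne : θ1 ≠ 0 := ((Real.sqrt_nonneg _).trans_lt hθ1).ne'
  refine ⟨?_, fun n => ?_, hpb⟩
  · calc lam * Y = (θstar / θ1) ^ 2 * (θ1 ^ 2 * lam * X) := by
          rw [← sq_sqrt_div_div_mul_sq_mul hX hY.le hθ1_ne]; ring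
      _ ≤ (θstar / θ1) ^ 2 * ∑ n, y n ^ 2 :=
          mul_le_mul_of_nonneg_left ((le_max_left _ _).trans hsum) (sq_nonneg _)
      _ = ∑ n, ystar n ^ 2 := (sum_sq_const_mul _ _ _).symm
  · simp only [ystar, hy n]
    field_simp

/-- The `θ⁽¹⁾ > θ* = √(Y/X)` case of Proposition 6 (scalarized model): rescaling the
received signals `y` by `θ*/θ⁽¹⁾` yields a solution feasible for `θ*` with the same `λ`. -/
theorem stmt_11 {N : ℕ} (η X Y lam θ1 : ℝ) (hη : 0 < η) (hX : 0 < X) (hY : 0 < Y)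
    (hlam : lam ∈ Set.Ioc (0 : ℝ) 1)
    (g H ρ x y p : Fin N → ℝ)
    (hg : ∀ n, 0 < g n) (hH : ∀ n, 0 ≤ H n) (hρ : ∀ n, ρ n ∈ Set.Icc (0 : ℝ) 1)
    (hx : ∀ n, 0 ≤ x n)
    (hθ1 : Real.sqrt (Y / X) < θ1)
    (hsum : max (θ1^2 * lam * X) (lam * Y) ≤ ∑ n, (y n)^2)
    (hy : ∀ n, y n = θ1 * x n * g n)
    (hpdef : ∀ n, p n = (x n)^2 * ((1 - ρ n) * H n + 1))
    (hpb : ∀ n, p n ≤ η * ρ n * H n) :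
    let θstar := Real.sqrt (Y / X)
    let ystar := fun n => (θstar / θ1) * y n
    lam * Y ≤ ∑ n, (ystar n)^2 ∧
    (∀ n, ystar n = θstar * x n * g n) ∧
    (∀ n, p n ≤ η * ρ n * H n) :=
  stmt_11_general η X Y lam θ1 hX hY g H ρ x y p hθ1 hsum hy hpb
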